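/- For every nonnegative integer n, positive integer t, and real numbers ℓ_1,...,ℓ_t with ℓ_1+...+ℓ_t = 0, the sum over t-tuples (i_1,...,i_t) of nonnegative integers with i_1+...+i_t = n of ∏_m binomial(2i_m + ℓ_m, i_m) equals (4^n / n!) * Γ(n + t/2) / Γ(t/2). -/

import Mathlib

/-!
Put `B a = ∑ᵢ (2i + a choose i) Xⁱ`. Pascal's rule gives `B (a + 1) = B a + X B (a + 2)`, and
induction on the natural number `a` and on the coefficient index then yields
`B a B b = B (a + b) B 0`; this extends to all real `a` because each coefficient of the
difference is a polynomial in `a`. Hence `∏ₘ B ℓₘ = B 0 ^ t` when `∑ ℓₘ = 0`. Since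
`B 0 = (1 - 4X)^(-1/2)` by the central binomial coefficients, `B 0 ^ t = (1 - 4X)^(-t/2)`, whose
`n`-th coefficient is `4ⁿ (t/2)(t/2 + 1)⋯(t/2 + n - 1) / n! = 4ⁿ Γ(n + t/2) / (n! Γ(t/2))`.
-/

/-- Generalized binomial coefficient with real upper argument. -/
noncomputable def rchoose (x : ℝ) (k : ℕ) : ℝ :=
  (∏ j ∈ Finset.range k, (x - j)) / (Nat.factorial k : ℝ)

open Finset PowerSeries

section ChooseFormulas

variable {K : Type*} [Field K] [CharZero K]

theorem Ring.choose_eq_prod_range_div (x : K) (k : ℕ) :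
    Ring.choose x k = (∏ j ∈ range k, (x - j)) / k.factorial := by
  rw [Ring.choose_eq_smul, ← Polynomial.aeval_eq_smeval, Polynomial.aeval_def,
    Polynomial.eval₂_eq_eval_map, descPochhammer_map, descPochhammer_eval_eq_prod_range,
    smul_eq_mul, inv_mul_eq_div]

theorem rchoose_eq_choose (x : ℝ) (k : ℕ) : rchoose x k = Ring.choose x k :=
  (Ring.choose_eq_prod_range_div x k).symm

theorem Ring.choose_succ_right_eq_mul_div (x : K) (k : ℕ) :
    Ring.choose x (k + 1) = Ring.choose x k * (x - k) / (k + 1) := by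
  rw [Ring.choose_eq_prod_range_div, Ring.choose_eq_prod_range_div, prod_range_succ,
    Nat.factorial_succ]
  push_cast
  field_simp

theorem Ring.choose_neg_eq_prod_range_div (x : K) (k : ℕ) :
    Ring.choose (-x) k = (-1) ^ k * (∏ j ∈ range k, (x + j)) / k.factorial := by
  have h : ∏ j ∈ range k, (-x - j) = ∏ j ∈ range k, -(x + j) :=
    prod_congr rfl fun j _ => by ring
  rw [Ring.choose_eq_prod_range_div, h, prod_neg, card_range]

theorem Ring.neg_four_pow_mul_choose_neg_half (k : ℕ) :
    (-4 : K) ^ k * Ring.choose (-1 / 2 : K) k = k.centralBinom := by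
  induction k with
  | zero => simp
  | succ k ih =>
    have hk : (k + 1 : K) ≠ 0 := by exact_mod_cast k.succ_ne_zero
    have hR : ((k + 1).centralBinom : K) = 2 * (2 * k + 1) * k.centralBinom / (k + 1) := by
      rw [eq_div_iff hk, mul_comm]
      exact_mod_cast Nat.succ_mul_centralBinom_succ k
    rw [Ring.choose_succ_right_eq_mul_div, hR, ← ih, pow_succ]
    field_simp
    ring

end ChooseFormulas

theorem Real.Gamma_nat_add {x : ℝ} (hx : 0 < x) (n : ℕ) :
    Real.Gamma (n + x) = (∏ j ∈ range n, (x + j)) * Real.Gamma x := by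
  induction n with
  | zero => simp
  | succ n ih =>
    have hpos : (0 : ℝ) < n + x := by positivity
    rw [Nat.cast_succ, add_right_comm, Real.Gamma_add_one hpos.ne', ih, prod_range_succ]
    ring

namespace PowerSeries

theorem binomialSeries_nsmul {R A : Type*} [CommRing R] [BinomialRing R] [Ring A] [Algebra R A]
    (t : ℕ) (r : R) : binomialSeries A (t • r) = binomialSeries A r ^ t := by
  induction t with
  | zero => simp
  | succ t ih => rw [succ_nsmul, binomialSeries_add, ih, pow_succ]

theorem eq_zero_of_succ_eq_add_X_mul {R : Type*} [Semiring R] {D : ℕ → R⟦X⟧} (h0 : D 0 = 0)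
    (h : ∀ m, D (m + 1) = D m + X * D (m + 2)) (m : ℕ) : D m = 0 := by
  suffices ∀ n m, coeff n (D m) = 0 from ext fun n => by simpa using this n m
  intro n
  induction n using Nat.strong_induction_on with
  | _ n ih =>
    intro m
    induction m with
    | zero => simp [h0]
    | succ m ihm =>
      rw [h, map_add, ihm, zero_add]
      cases n with
      | zero => exact coeff_zero_X_mul _
      | succ n => rw [coeff_succ_X_mul]; exact ih n n.lt_succ_self _

theorem coeff_prod_univ_eq_sum_antidiagonalTuple {R : Type*} [CommSemiring R] {t : ℕ}
    (f : Fin t → R⟦X⟧) (n : ℕ) :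
    coeff n (∏ i, f i) = ∑ l ∈ Nat.antidiagonalTuple t n, ∏ i, coeff (l i) (f i) := by
  rw [coeff_prod, finsuppAntidiag, sum_map, ← piAntidiag_univ_fin_eq_antidiagonalTuple,
    ← sum_attach (piAntidiag univ n)]
  rfl

section CentralBinomSeries

variable {R : Type*} [CommRing R] [BinomialRing R]

noncomputable def centralBinomSeries (a : R) : R⟦X⟧ :=
  mk fun i => Ring.choose (2 * i + a) i

theorem coeff_centralBinomSeries (a : R) (i : ℕ) :
    coeff i (centralBinomSeries a) = Ring.choose (2 * i + a) i :=
  coeff_mk _ _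

theorem centralBinomSeries_add_one (a : R) :
    centralBinomSeries (a + 1) = centralBinomSeries a + X * centralBinomSeries (a + 2) := by
  ext (_ | i)
  · simp only [map_add, coeff_zero_X_mul, coeff_centralBinomSeries, Ring.choose_zero_right,
      add_zero]
  · rw [map_add, coeff_succ_X_mul]
    simp only [coeff_centralBinomSeries]
    rw [show 2 * ((i + 1 : ℕ) : R) + (a + 1) = 2 * (i + 1 : ℕ) + a + 1 by ring,
      Ring.choose_succ_succ, show 2 * (i : R) + (a + 2) = 2 * (i + 1 : ℕ) + a by push_cast; ring,
      add_comm]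

theorem centralBinomSeries_natCast_mul (m : ℕ) (b : R) :
    centralBinomSeries (m : R) * centralBinomSeries b
      = centralBinomSeries (m + b) * centralBinomSeries 0 := by
  rw [← sub_eq_zero]
  refine eq_zero_of_succ_eq_add_X_mul (D := fun k : ℕ => centralBinomSeries (k : R) *
    centralBinomSeries b - centralBinomSeries (k + b) * centralBinomSeries 0) (by simp [mul_comm])
    (fun m => ?_) m
  simp only [Nat.cast_add, Nat.cast_one, Nat.cast_ofNat]
  rw [centralBinomSeries_add_one, add_right_comm, centralBinomSeries_add_one,
    add_right_comm (m : R) b 2]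
  ring

theorem map_centralBinomSeries {S : Type*} [CommRing S] [BinomialRing S] (f : R →+* S) (a : R) :
    map f (centralBinomSeries a) = centralBinomSeries (f a) := by
  ext i
  simp [coeff_centralBinomSeries, Ring.map_choose, map_ofNat]

end CentralBinomSeries

section Field

variable {K : Type*} [Field K] [CharZero K]

theorem centralBinomSeries_mul (a b : K) :
    centralBinomSeries a * centralBinomSeries b
      = centralBinomSeries (a + b) * centralBinomSeries 0 := by
  -- the difference for `a = X` over `K[X]`: its coefficients are polynomials vanishing on `ℕ`
  set D : (Polynomial K)⟦X⟧ :=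
    centralBinomSeries Polynomial.X * centralBinomSeries (Polynomial.C b)
      - centralBinomSeries (Polynomial.X + Polynomial.C b) * centralBinomSeries 0
  have hD : D = 0 := by
    refine PowerSeries.ext fun n => ?_
    rw [map_zero]
    refine Polynomial.eq_zero_of_infinite_isRoot _
      (Set.infinite_of_injective_forall_mem (Nat.cast_injective (R := K)) fun m : ℕ => ?_)
    change Polynomial.eval (m : K) (coeff n D) = 0
    rw [← Polynomial.coe_evalRingHom, ← coeff_map]
    simp only [D, map_sub, map_mul, map_centralBinomSeries, Polynomial.coe_evalRingHom,
      Polynomial.eval_X, Polynomial.eval_C, Polynomial.eval_add, Polynomial.eval_zero]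
    rw [centralBinomSeries_natCast_mul, sub_self]
  simpa [D, map_centralBinomSeries, sub_eq_zero] using congrArg (map (Polynomial.evalRingHom a)) hD

theorem centralBinomSeries_zero_mul_prod {ι : Type*} (s : Finset ι) (ℓ : ι → K) :
    centralBinomSeries 0 * ∏ i ∈ s, centralBinomSeries (ℓ i)
      = centralBinomSeries (∑ i ∈ s, ℓ i) * centralBinomSeries 0 ^ #s := by
  induction s using Finset.cons_induction with
  | empty => simp [mul_comm]
  | cons i s hi ih =>
    rw [prod_cons, sum_cons, card_cons, mul_left_comm, ih, ← mul_assoc, centralBinomSeries_mul,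
      pow_succ]
    ring

theorem prod_centralBinomSeries_of_sum_eq_zero {ι : Type*} {s : Finset ι} {ℓ : ι → K}
    (h : ∑ i ∈ s, ℓ i = 0) :
    ∏ i ∈ s, centralBinomSeries (ℓ i) = centralBinomSeries 0 ^ #s := by
  have hB : centralBinomSeries (0 : K) ≠ 0 := fun h0 => by
    simpa [coeff_centralBinomSeries] using congrArg (coeff 0) h0
  apply mul_left_cancel₀ hB
  rw [centralBinomSeries_zero_mul_prod, h]

theorem centralBinomSeries_zero_eq_rescale_binomialSeries :
    centralBinomSeries (0 : K) = rescale (-4) (binomialSeries K (-1 / 2 : K)) := by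
  ext i
  rw [coeff_centralBinomSeries, add_zero, show (2 * i : K) = (2 * i : ℕ) by push_cast; ring,
    Ring.choose_natCast, coeff_rescale, binomialSeries_coeff, smul_eq_mul, mul_one,
    Ring.neg_four_pow_mul_choose_neg_half, Nat.centralBinom_eq_two_mul_choose]

end Field

end PowerSeries

theorem sum_gen_binom_tuple_eq_gamma (n t : ℕ) (ht : 0 < t) (ℓ : Fin t → ℝ)
    (hℓ : ∑ m, ℓ m = 0) :
    ∑ f ∈ Finset.Nat.antidiagonalTuple t n,
        ∏ m : Fin t, rchoose (2 * (f m : ℝ) + ℓ m) (f m)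
      = 4 ^ n / (Nat.factorial n : ℝ)
          * Real.Gamma ((n : ℝ) + (t : ℝ) / 2) / Real.Gamma ((t : ℝ) / 2) := by
  have hseries := congrArg (coeff n) (prod_centralBinomSeries_of_sum_eq_zero hℓ)
  rw [coeff_prod_univ_eq_sum_antidiagonalTuple, centralBinomSeries_zero_eq_rescale_binomialSeries,
    ← map_pow, ← binomialSeries_nsmul, coeff_rescale, binomialSeries_coeff] at hseries
  simp only [coeff_centralBinomSeries, card_univ, Fintype.card_fin] at hseries
  simp_rw [rchoose_eq_choose, hseries]
  have ht2 : (0 : ℝ) < t / 2 := by positivity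
  rw [show t • (-1 / 2 : ℝ) = -(t / 2) by rw [nsmul_eq_mul]; ring,
    Ring.choose_neg_eq_prod_range_div, Real.Gamma_nat_add ht2, smul_eq_mul, mul_one,
    ← mul_div_assoc, ← mul_assoc, ← mul_pow]
  field_simp [(Real.Gamma_pos_of_pos ht2).ne']
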